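/- For every nonnegative integer n, ∑_{k=0}^{n} k⁵·H_{n-k}² = (n²(n+1)²(2n²+2n−1)/12)·H_{n+1}² − (1/120)·n(n+1)(98n⁴+236n³+159n²+n−14)·H_{n+1} + (1/21600)·n(n+1)(26978n⁴+49996n³+29599n²+1961n−3234). -/

import Mathlib

/-!
Reflecting the summation index turns the sum into `∑_{j ≤ n} (n - j)^5 H_j^2`; expanding
`(n - j)^5` reduces it to the moments `∑_{j < N} j^m H_j^2`, `m ≤ 5`. Each moment has a closed
form `A_m(N) H_N^2 + B_m(N) H_N + C_m(N)` with polynomial coefficients (`A_m` is the Faulhaber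
polynomial `∑_{j < N} j^m`, as summation by parts predicts), checked by telescoping through
`H_{N+1} = H_N + 1/(N+1)`.
-/

open Finset

/-- The harmonic number `H n = ∑_{k=1}^n 1/k`. -/
def H (n : ℕ) : ℚ := ∑ k ∈ Finset.range n, (1 : ℚ) / ((k : ℚ) + 1)

/-- The generalized harmonic number `H n ^ (m) = ∑_{k=1}^n 1/k^m`. -/
def Hgen (m n : ℕ) : ℚ := ∑ k ∈ Finset.range n, (1 : ℚ) / ((k : ℚ) + 1) ^ m

theorem H_zero : H 0 = 0 := rfl

theorem H_succ (n : ℕ) : H (n + 1) = H n + 1 / ((n : ℚ) + 1) := by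
  rw [H, sum_range_succ, ← H]

theorem sum_range_succ_pow_mul_reflect {R : Type*} [CommRing R] (f : ℕ → R) (m n : ℕ) :
    ∑ k ∈ range (n + 1), (k : R) ^ m * f (n - k) =
      ∑ j ∈ range (n + 1), ((n : R) - j) ^ m * f j := by
  rw [← sum_range_reflect]
  refine sum_congr rfl fun j hj => ?_
  have hjn : j ≤ n := Nat.lt_succ_iff.mp (mem_range.mp hj)
  rw [Nat.add_sub_cancel, Nat.sub_sub_self hjn, Nat.cast_sub hjn]

theorem sum_range_H_sq (n : ℕ) :
    ∑ j ∈ range n, H j ^ 2 =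
      (n : ℚ) * H n ^ 2 + (-2 * n - 1 : ℚ) * H n + (2 * n : ℚ) := by
  apply sum_range_induction
  · simp [H_zero]
  · intro k _
    rw [H_succ]; push_cast; field_simp; ring

theorem sum_range_mul_H_sq (n : ℕ) :
    ∑ j ∈ range n, (j : ℚ) * H j ^ 2 =
      (n ^ 2 - n : ℚ) / 2 * H n ^ 2 + (-n ^ 2 + n + 1 : ℚ) / 2 * H n
        + (n ^ 2 - 3 * n : ℚ) / 4 := by
  apply sum_range_induction
  · simp [H_zero]
  · intro k _
    rw [H_succ]; push_cast; field_simp; ring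

theorem sum_range_sq_mul_H_sq (n : ℕ) :
    ∑ j ∈ range n, (j : ℚ) ^ 2 * H j ^ 2 =
      (2 * n ^ 3 - 3 * n ^ 2 + n : ℚ) / 6 * H n ^ 2
        + (-4 * n ^ 3 + 3 * n ^ 2 + n - 3 : ℚ) / 18 * H n
        + (8 * n ^ 3 - 15 * n ^ 2 + 25 * n : ℚ) / 108 := by
  apply sum_range_induction
  · simp [H_zero]
  · intro k _
    rw [H_succ]; push_cast; field_simp; ring

theorem sum_range_pow_three_mul_H_sq (n : ℕ) :
    ∑ j ∈ range n, (j : ℚ) ^ 3 * H j ^ 2 =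
      (n ^ 4 - 2 * n ^ 3 + n ^ 2 : ℚ) / 4 * H n ^ 2
        + (-3 * n ^ 4 + 2 * n ^ 3 + 3 * n ^ 2 - 2 * n : ℚ) / 24 * H n
        + (9 * n ^ 4 - 14 * n ^ 3 + 15 * n ^ 2 - 10 * n : ℚ) / 288 := by
  apply sum_range_induction
  · simp [H_zero]
  · intro k _
    rw [H_succ]; push_cast; field_simp; ring

theorem sum_range_pow_four_mul_H_sq (n : ℕ) :
    ∑ j ∈ range n, (j : ℚ) ^ 4 * H j ^ 2 =
      (6 * n ^ 5 - 15 * n ^ 4 + 10 * n ^ 3 - n : ℚ) / 30 * H n ^ 2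
        + (-72 * n ^ 5 + 45 * n ^ 4 + 130 * n ^ 3 - 75 * n ^ 2 - 28 * n + 30 : ℚ) / 900 * H n
        + (864 * n ^ 5 - 1215 * n ^ 4 + 1090 * n ^ 3 - 525 * n ^ 2 - 2014 * n : ℚ) / 54000 := by
  apply sum_range_induction
  · simp [H_zero]
  · intro k _
    rw [H_succ]; push_cast; field_simp; ring

theorem sum_range_pow_five_mul_H_sq (n : ℕ) :
    ∑ j ∈ range n, (j : ℚ) ^ 5 * H j ^ 2 =
      (2 * n ^ 6 - 6 * n ^ 5 + 5 * n ^ 4 - n ^ 2 : ℚ) / 12 * H n ^ 2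
        + (-20 * n ^ 6 + 12 * n ^ 5 + 55 * n ^ 4 - 30 * n ^ 3 - 35 * n ^ 2 + 18 * n : ℚ) / 360
          * H n
        + (200 * n ^ 6 - 264 * n ^ 5 + 215 * n ^ 4 - 90 * n ^ 3 - 775 * n ^ 2 + 714 * n : ℚ)
          / 21600 := by
  apply sum_range_induction
  · simp [H_zero]
  · intro k _
    rw [H_succ]; push_cast; field_simp; ring

theorem stmt18 (n : ℕ) :
    ∑ k ∈ Finset.range (n + 1), (k : ℚ) ^ 5 * (H (n - k)) ^ 2 =
      ((n : ℚ) ^ 2 * ((n : ℚ) + 1) ^ 2 * (2 * (n : ℚ) ^ 2 + 2 * (n : ℚ) - 1) / 12) * (H (n + 1)) ^ 2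
        - (1 / 120) * (n : ℚ) * ((n : ℚ) + 1) *
            (98 * (n : ℚ) ^ 4 + 236 * (n : ℚ) ^ 3 + 159 * (n : ℚ) ^ 2 + (n : ℚ) - 14) * H (n + 1)
        + (1 / 21600) * (n : ℚ) * ((n : ℚ) + 1) *
            (26978 * (n : ℚ) ^ 4 + 49996 * (n : ℚ) ^ 3 + 29599 * (n : ℚ) ^ 2 + 1961 * (n : ℚ) - 3234) := by
  have expand : ∀ j : ℕ, ((n : ℚ) - j) ^ 5 * H j ^ 2 =
      n ^ 5 * H j ^ 2 - 5 * n ^ 4 * (j * H j ^ 2) + 10 * n ^ 3 * (j ^ 2 * H j ^ 2)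
        - 10 * n ^ 2 * (j ^ 3 * H j ^ 2) + 5 * n * (j ^ 4 * H j ^ 2) - j ^ 5 * H j ^ 2 :=
    fun j => by ring
  rw [sum_range_succ_pow_mul_reflect (fun j => H j ^ 2)]
  simp only [expand, sum_add_distrib, sum_sub_distrib, ← mul_sum]
  rw [sum_range_H_sq, sum_range_mul_H_sq, sum_range_sq_mul_H_sq, sum_range_pow_three_mul_H_sq,
    sum_range_pow_four_mul_H_sq, sum_range_pow_five_mul_H_sq]
  push_cast
  ring
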